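/- The reproducing kernel R_N(w,z) = Σ_{j=0}^{N−1} Q_j(w)ᵗ P_j(z) satisfies: (a) for every matrix polynomial P of degree ≤ N−1 and every z ∈ ℂ, (2πi)⁻¹ ∮_γ P(w) W(w) R_N(w,z) dw = P(z); (b) for every matrix polynomial Q of degree ≤ N−1 and every w ∈ ℂ, (2πi)⁻¹ ∮_γ R_N(w,z) W(z) Q(z)ᵗ dz = Q(w)ᵗ; (c) if R̂(w,z) = Σ_{a,b=0}^{N−1} C_{a,b} w^a z^b (C_{a,b} ∈ M_p(ℂ)) satisfies either property (a) or property (b) in place of R_N, then R̂(w,z) = R_N(w,z) for all w, z ∈ ℂ. -/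
import Mathlib


open Matrix

/-- The normalized matrix-valued contour integral
`(2πi)⁻¹ ∮_{|z-c|=R} f(z) dz`, taken entrywise. -/
noncomputable def matCircleInt (p : ℕ) (c : ℂ) (R : ℝ)
    (f : ℂ → Matrix (Fin p) (Fin p) ℂ) : Matrix (Fin p) (Fin p) ℂ :=
  Matrix.of fun a b =>
    (2 * (Real.pi : ℂ) * Complex.I)⁻¹ * ∮ z in C(c, R), f z a b

/-- The `pN × pN` Gram matrix, viewed as an `N × N` block matrix with `p × p` blocks,
whose `(j,k)` block is `(2πi)⁻¹ ∮_γ W(z) z^{N+j-k} dz/z`. -/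
noncomputable def gramMatrix (p N : ℕ) (c : ℂ) (R : ℝ)
    (W : ℂ → Matrix (Fin p) (Fin p) ℂ) :
    Matrix (Fin N × Fin p) (Fin N × Fin p) ℂ :=
  Matrix.of fun x y =>
    (2 * (Real.pi : ℂ) * Complex.I)⁻¹ *
      ∮ z in C(c, R), W z x.2 y.2 * z ^ (N + (x.1 : ℕ) - (y.1 : ℕ)) / z

/-- `P_j(z) = Σ_{k=0}^{N-1} 𝐏_{j,k} z^k`, where `𝐏_{j,k}` is the `(j,k)` block of `𝐏`. -/
noncomputable def blockPolyP (p N : ℕ)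
    (PP : Matrix (Fin N × Fin p) (Fin N × Fin p) ℂ) (j : Fin N) (z : ℂ) :
    Matrix (Fin p) (Fin p) ℂ :=
  ∑ k : Fin N, z ^ (k : ℕ) • Matrix.of fun a b => PP (j, a) (k, b)

/-- `Q_j(z) = Σ_{k=0}^{N-1} 𝐐_{j,k} z^{N-1-k}`. -/
noncomputable def blockPolyQ (p N : ℕ)
    (QQ : Matrix (Fin N × Fin p) (Fin N × Fin p) ℂ) (j : Fin N) (z : ℂ) :
    Matrix (Fin p) (Fin p) ℂ :=
  ∑ k : Fin N, z ^ (N - 1 - (k : ℕ)) • Matrix.of fun a b => QQ (j, a) (k, b)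

/-- A matrix polynomial of degree `≤ N-1` given by its coefficients:
`P(z) = Σ_{i=0}^{N-1} C_i z^i`. -/
noncomputable def matPoly (p N : ℕ) (C : Fin N → Matrix (Fin p) (Fin p) ℂ) (z : ℂ) :
    Matrix (Fin p) (Fin p) ℂ :=
  ∑ i : Fin N, z ^ (i : ℕ) • C i

/-- The reproducing kernel `R_N(w,z) = Σ_{j=0}^{N-1} Q_j(w)ᵗ P_j(z)`. -/
noncomputable def reprodKernel (p N : ℕ)
    (PP QQ : Matrix (Fin N × Fin p) (Fin N × Fin p) ℂ) (w z : ℂ) :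
    Matrix (Fin p) (Fin p) ℂ :=
  ∑ j : Fin N, (blockPolyQ p N QQ j w)ᵀ * blockPolyP p N PP j z

open MeasureTheory

lemma circleIntegral_finset_sum {ι : Type*} (s : Finset ι) (c : ℂ) (R : ℝ)
    (f : ι → ℂ → ℂ) (h : ∀ i ∈ s, CircleIntegrable (f i) c R) :
    (∮ z in C(c, R), ∑ i ∈ s, f i z) = ∑ i ∈ s, ∮ z in C(c, R), f i z := by
  simp only [circleIntegral, Finset.smul_sum]
  exact intervalIntegral.integral_finset_sum fun i hi => (h i hi).out

lemma circleIntegral_const_mul (a : ℂ) (f : ℂ → ℂ) (c : ℂ) (R : ℝ) :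
    (∮ z in C(c, R), a * f z) = a * ∮ z in C(c, R), f z := by
  simpa [smul_eq_mul] using circleIntegral.integral_smul a f c R

lemma gram_apply (p N : ℕ) (c : ℂ) (R : ℝ) (hR : 0 < R)
    (W : ℂ → Matrix (Fin p) (Fin p) ℂ) (x y : Fin N × Fin p) :
    gramMatrix p N c R W x y =
      (2 * (Real.pi : ℂ) * Complex.I)⁻¹ *
        ∮ z in C(c, R), W z x.2 y.2 * z ^ (N + (x.1 : ℕ) - (y.1 : ℕ) - 1) := by
  have hy : (y.1 : ℕ) < N := y.1.isLt
  show (2 * (Real.pi : ℂ) * Complex.I)⁻¹ * _ = _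
  congr 1
  simp only [circleIntegral]
  refine intervalIntegral.integral_congr_ae ?_
  have hcnt : (circleMap c R ⁻¹' {(0:ℂ)}).Countable :=
    (Set.countable_singleton _).preimage_circleMap c hR.ne'
  filter_upwards [hcnt.ae_notMem volume] with θ hθ _
  have hz : circleMap c R θ ≠ 0 := hθ
  congr 1
  have he : N + (x.1 : ℕ) - (y.1 : ℕ) = (N + (x.1 : ℕ) - (y.1 : ℕ) - 1) + 1 := by omega
  conv_lhs => rw [he]
  rw [pow_succ, ← mul_assoc, mul_div_assoc, div_self hz, mul_one]
lemma keyGeneral (p N : ℕ) (c : ℂ) (R : ℝ) (hR : 0 < R)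
    (W : ℂ → Matrix (Fin p) (Fin p) ℂ)
    (hW : ∀ a b, ContinuousOn (fun z => W z a b) (Metric.sphere c R))
    (A B : Fin N → Matrix (Fin p) (Fin p) ℂ) :
    matCircleInt p c R (fun w =>
        (∑ i : Fin N, w ^ (i : ℕ) • A i) * W w * (∑ k : Fin N, w ^ (N - 1 - (k : ℕ)) • B k))
      = ∑ i : Fin N, ∑ k : Fin N,
          A i * (Matrix.of fun a b => gramMatrix p N c R W (i, a) (k, b)) * B k := by
  ext α β
  have hint : ∀ w : ℂ,
      ((∑ i : Fin N, w ^ (i : ℕ) • A i) * W w * (∑ k : Fin N, w ^ (N - 1 - (k : ℕ)) • B k)) α β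
        = ∑ x : Fin p × Fin N × Fin N × Fin p,
            (A x.2.2.1 α x.2.2.2 * B x.2.1 x.1 β) *
              (W w x.2.2.2 x.1 * w ^ ((x.2.2.1 : ℕ) + (N - 1 - (x.2.1 : ℕ)))) := by
    intro w
    simp only [Matrix.mul_apply, Matrix.sum_apply, Matrix.smul_apply, smul_eq_mul,
      Finset.sum_mul, Finset.mul_sum, Fintype.sum_prod_type, pow_add]
    refine Finset.sum_congr rfl fun ν _ => Finset.sum_congr rfl fun k _ =>
      Finset.sum_congr rfl fun i _ => Finset.sum_congr rfl fun μ _ => by ring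
  show (2 * (Real.pi : ℂ) * Complex.I)⁻¹ * (∮ w in C(c, R), _) = _
  simp only [hint]
  rw [circleIntegral_finset_sum _ c R _ (fun x _ => ?_)]
  swap
  · exact (continuousOn_const.mul ((hW x.2.2.2 x.1).mul
      ((continuous_pow _).continuousOn))).circleIntegrable hR.le
  · simp only [circleIntegral_const_mul, Finset.mul_sum]
    have hrhs : (∑ i : Fin N, ∑ k : Fin N,
        A i * (Matrix.of fun a b => gramMatrix p N c R W (i, a) (k, b)) * B k) α β
        = ∑ x : Fin N × Fin N × Fin p × Fin p,
            (A x.1 α x.2.2.2 * B x.2.1 x.2.2.1 β) *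
              ((2 * (Real.pi : ℂ) * Complex.I)⁻¹ *
                ∮ w in C(c, R), W w x.2.2.2 x.2.2.1 * w ^ ((x.1 : ℕ) + (N - 1 - (x.2.1 : ℕ)))) := by
      simp only [Matrix.sum_apply, Matrix.mul_apply, Matrix.of_apply,
        Finset.sum_mul, Finset.mul_sum, Fintype.sum_prod_type]
      refine Finset.sum_congr rfl fun i _ => Finset.sum_congr rfl fun k _ =>
        Finset.sum_congr rfl fun ν _ => Finset.sum_congr rfl fun μ _ => ?_
      rw [gram_apply p N c R hR W]
      have hek : N + (i : ℕ) - (k : ℕ) - 1 = (i : ℕ) + (N - 1 - (k : ℕ)) := by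
        have := k.isLt; omega
      rw [hek]; ring
    rw [hrhs]
    refine Fintype.sum_equiv
      ⟨fun x => (x.2.2.1, x.2.1, x.1, x.2.2.2), fun y => (y.2.2.1, y.2.1, y.1, y.2.2.2),
        fun x => rfl, fun y => rfl⟩ _ _ fun x => ?_
    simp only [Equiv.coe_fn_mk]
    ring
private lemma sum4_swap {M : Type*} [AddCommMonoid M] {ι₁ ι₂ ι₃ ι₄ : Type*}
    [Fintype ι₁] [Fintype ι₂] [Fintype ι₃] [Fintype ι₄]
    (f : ι₁ → ι₂ → ι₃ → ι₄ → M) :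
    (∑ a : ι₁, ∑ b : ι₂, ∑ c : ι₃, ∑ d : ι₄, f a b c d)
      = ∑ d : ι₄, ∑ b : ι₂, ∑ c : ι₃, ∑ a : ι₁, f a b c d := by
  have h1 : (∑ a : ι₁, ∑ b : ι₂, ∑ c : ι₃, ∑ d : ι₄, f a b c d)
      = ∑ x : ι₁ × ι₂ × ι₃ × ι₄, f x.1 x.2.1 x.2.2.1 x.2.2.2 := by
    simp [Fintype.sum_prod_type]
  have h2 : (∑ d : ι₄, ∑ b : ι₂, ∑ c : ι₃, ∑ a : ι₁, f a b c d)
      = ∑ x : ι₄ × ι₂ × ι₃ × ι₁, f x.2.2.2 x.2.1 x.2.2.1 x.1 := by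
    simp [Fintype.sum_prod_type]
  rw [h1, h2]
  exact Fintype.sum_equiv
    ⟨fun x => (x.2.2.2, x.2.1, x.2.2.1, x.1), fun y => (y.2.2.2, y.2.1, y.2.2.1, y.1),
      fun x => rfl, fun y => rfl⟩ _ _ fun x => rfl

private lemma sum3_rot {M : Type*} [AddCommMonoid M] {ι₁ ι₂ ι₃ : Type*}
    [Fintype ι₁] [Fintype ι₂] [Fintype ι₃] (f : ι₁ → ι₂ → ι₃ → M) :
    (∑ a : ι₁, ∑ b : ι₂, ∑ c : ι₃, f a b c) = ∑ c : ι₃, ∑ a : ι₁, ∑ b : ι₂, f a b c := by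
  have h1 : (∑ a : ι₁, ∑ b : ι₂, ∑ c : ι₃, f a b c)
      = ∑ x : ι₁ × ι₂ × ι₃, f x.1 x.2.1 x.2.2 := by simp [Fintype.sum_prod_type]
  have h2 : (∑ c : ι₃, ∑ a : ι₁, ∑ b : ι₂, f a b c)
      = ∑ x : ι₃ × ι₁ × ι₂, f x.2.1 x.2.2 x.1 := by simp [Fintype.sum_prod_type]
  rw [h1, h2]
  exact Fintype.sum_equiv
    ⟨fun x => (x.2.2, x.1, x.2.1), fun y => (y.2.1, y.2.2, y.1),
      fun x => rfl, fun y => rfl⟩ _ _ fun x => rfl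

private lemma sum_rev {p N : ℕ} (v : ℂ) (g : Fin N → Matrix (Fin p) (Fin p) ℂ) :
    (∑ k : Fin N, v ^ (N - 1 - (k : ℕ)) • g k) = ∑ l : Fin N, v ^ (l : ℕ) • g (Fin.rev l) := by
  refine Fintype.sum_equiv Fin.revPerm _ _ fun x => ?_
  have h1 : ((Fin.rev x : Fin N) : ℕ) = N - 1 - (x : ℕ) := by
    have := x.isLt; simp [Fin.val_rev]; omega
  rw [show (Fin.revPerm x : Fin N) = Fin.rev x from rfl, Fin.rev_rev, h1]

private lemma blockPolyQ_transpose (p N : ℕ) (QQ : Matrix (Fin N × Fin p) (Fin N × Fin p) ℂ)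
    (j : Fin N) (w : ℂ) :
    (blockPolyQ p N QQ j w)ᵀ
      = ∑ k : Fin N, w ^ (N - 1 - (k : ℕ)) • Matrix.of fun a b => QQ (j, b) (k, a) := by
  rw [blockPolyQ, Matrix.transpose_sum]
  refine Finset.sum_congr rfl fun k _ => ?_
  rw [Matrix.transpose_smul]
  rfl

private lemma kernel_eq_sum_w (p N : ℕ) (PP QQ : Matrix (Fin N × Fin p) (Fin N × Fin p) ℂ)
    (w z : ℂ) :
    reprodKernel p N PP QQ w z
      = ∑ k : Fin N, w ^ (N - 1 - (k : ℕ)) •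
          ∑ j : Fin N, (Matrix.of fun a b => QQ (j, b) (k, a)) * blockPolyP p N PP j z := by
  rw [reprodKernel]
  simp only [blockPolyQ_transpose, Finset.sum_mul, smul_mul_assoc, Finset.smul_sum]
  exact Finset.sum_comm

private lemma kernel_eq_sum_z (p N : ℕ) (PP QQ : Matrix (Fin N × Fin p) (Fin N × Fin p) ℂ)
    (w z : ℂ) :
    reprodKernel p N PP QQ w z
      = ∑ l : Fin N, z ^ (l : ℕ) •
          ∑ j : Fin N, (blockPolyQ p N QQ j w)ᵀ * Matrix.of fun a b => PP (j, a) (l, b) := by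
  rw [reprodKernel]
  simp only [blockPolyP, Finset.mul_sum, mul_smul_comm, Finset.smul_sum]
  exact Finset.sum_comm
private lemma one_block (p N : ℕ) (i l : Fin N) (a b : Fin p) :
    (1 : Matrix (Fin N × Fin p) (Fin N × Fin p) ℂ) (i, a) (l, b)
      = ((if i = l then (1 : Matrix (Fin p) (Fin p) ℂ) else 0) : Matrix (Fin p) (Fin p) ℂ) a b := by
  by_cases hil : i = l <;> by_cases hab : a = b <;>
    simp [Matrix.one_apply, Prod.ext_iff, hil, hab]

private lemma blocks_a (p N : ℕ) (c : ℂ) (R : ℝ) (W : ℂ → Matrix (Fin p) (Fin p) ℂ)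
    (PP QQ : Matrix (Fin N × Fin p) (Fin N × Fin p) ℂ)
    (hG1 : gramMatrix p N c R W * (QQᵀ * PP) = 1) (i l : Fin N) :
    (∑ k : Fin N, ∑ j : Fin N,
        (Matrix.of fun a b => gramMatrix p N c R W (i, a) (k, b)) *
          (Matrix.of fun a b => QQ (j, b) (k, a)) *
          (Matrix.of fun a b => PP (j, a) (l, b)))
      = if i = l then 1 else 0 := by
  ext a b
  have h : (gramMatrix p N c R W * (QQᵀ * PP)) (i, a) (l, b)
      = (1 : Matrix (Fin N × Fin p) (Fin N × Fin p) ℂ) (i, a) (l, b) := by rw [hG1]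
  rw [one_block p N i l a b] at h
  rw [← h]
  simp only [Matrix.mul_apply, Matrix.sum_apply, Matrix.of_apply, Matrix.transpose_apply,
    Fintype.sum_prod_type, Finset.sum_mul, Finset.mul_sum]
  -- LHS order: (k, j, u, ν) ; RHS order: (k, ν, j, u)
  refine Finset.sum_congr rfl fun k _ => ?_
  rw [sum3_rot fun j u ν => gramMatrix p N c R W (i, a) (k, ν) * QQ (j, u) (k, ν) * PP (j, u) (l, b)]
  exact Finset.sum_congr rfl fun ν _ => Finset.sum_congr rfl fun j _ =>
    Finset.sum_congr rfl fun u _ => by ring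

private lemma blocks_b (p N : ℕ) (c : ℂ) (R : ℝ) (W : ℂ → Matrix (Fin p) (Fin p) ℂ)
    (PP QQ : Matrix (Fin N × Fin p) (Fin N × Fin p) ℂ)
    (hG2 : (QQᵀ * PP) * gramMatrix p N c R W = 1) (m k : Fin N) :
    (∑ j : Fin N, ∑ l : Fin N,
        (Matrix.of fun a b => QQ (j, b) (m, a)) *
          ((Matrix.of fun a b => PP (j, a) (l, b)) *
            (Matrix.of fun a b => gramMatrix p N c R W (l, a) (k, b))))
      = if m = k then 1 else 0 := by
  ext a b
  have hG2' : QQᵀ * (PP * gramMatrix p N c R W) = 1 := by rw [← Matrix.mul_assoc, hG2]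
  have h : (QQᵀ * (PP * gramMatrix p N c R W)) (m, a) (k, b)
      = (1 : Matrix (Fin N × Fin p) (Fin N × Fin p) ℂ) (m, a) (k, b) := by rw [hG2']
  rw [one_block p N m k a b] at h
  rw [← h]
  simp only [Matrix.mul_apply, Matrix.sum_apply, Matrix.of_apply, Matrix.transpose_apply,
    Fintype.sum_prod_type, Finset.sum_mul, Finset.mul_sum]
  exact Finset.sum_congr rfl fun j _ => Finset.sum_comm
private lemma matPoly_transpose (p N : ℕ) (C : Fin N → Matrix (Fin p) (Fin p) ℂ) (z : ℂ) :
    (matPoly p N C z)ᵀ = ∑ k : Fin N, z ^ (N - 1 - (k : ℕ)) • (C (Fin.rev k))ᵀ := by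
  rw [matPoly, Matrix.transpose_sum]
  simp only [Matrix.transpose_smul]
  have h := sum_rev (p := p) z (fun k => (C (Fin.rev k))ᵀ)
  simp only [Fin.rev_rev] at h
  exact h.symm

private lemma partA (p N : ℕ) (c : ℂ) (R : ℝ) (hR : 0 < R)
    (W : ℂ → Matrix (Fin p) (Fin p) ℂ)
    (hW : ∀ a b, ContinuousOn (fun z => W z a b) (Metric.sphere c R))
    (PP QQ : Matrix (Fin N × Fin p) (Fin N × Fin p) ℂ)
    (hG1 : gramMatrix p N c R W * (QQᵀ * PP) = 1)
    (C : Fin N → Matrix (Fin p) (Fin p) ℂ) (z : ℂ) :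
    matCircleInt p c R (fun w => matPoly p N C w * W w * reprodKernel p N PP QQ w z)
      = matPoly p N C z := by
  have h1 : (fun w => matPoly p N C w * W w * reprodKernel p N PP QQ w z)
      = fun w => (∑ i : Fin N, w ^ (i : ℕ) • C i) * W w *
          (∑ k : Fin N, w ^ (N - 1 - (k : ℕ)) •
            ∑ j : Fin N, (Matrix.of fun a b => QQ (j, b) (k, a)) * blockPolyP p N PP j z) := by
    funext w; rw [matPoly, kernel_eq_sum_w]
  rw [h1, keyGeneral p N c R hR W hW]
  simp only [blockPolyP, Finset.mul_sum, mul_smul_comm]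
  rw [matPoly]
  refine Finset.sum_congr rfl fun i _ => ?_
  rw [sum3_rot fun (k j l : Fin N) => z ^ l.val •
    (C i * (Matrix.of fun a b => gramMatrix p N c R W (i, a) (k, b)) *
      ((Matrix.of fun a b => QQ (j, b) (k, a)) * (Matrix.of fun a b => PP (j, a) (l, b))))]
  have hstep : ∀ l : Fin N, (∑ k : Fin N, ∑ j : Fin N, z ^ (l : ℕ) •
      (C i * (Matrix.of fun a b => gramMatrix p N c R W (i, a) (k, b)) *
        ((Matrix.of fun a b => QQ (j, b) (k, a)) * (Matrix.of fun a b => PP (j, a) (l, b)))))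
      = z ^ (l : ℕ) • (C i * if i = l then 1 else 0) := by
    intro l
    have hb := blocks_a p N c R W PP QQ hG1 i l
    calc (∑ k : Fin N, ∑ j : Fin N, z ^ (l : ℕ) •
        (C i * (Matrix.of fun a b => gramMatrix p N c R W (i, a) (k, b)) *
          ((Matrix.of fun a b => QQ (j, b) (k, a)) * (Matrix.of fun a b => PP (j, a) (l, b)))))
        = z ^ (l : ℕ) • (C i * ∑ k : Fin N, ∑ j : Fin N,
            (Matrix.of fun a b => gramMatrix p N c R W (i, a) (k, b)) *
              (Matrix.of fun a b => QQ (j, b) (k, a)) * (Matrix.of fun a b => PP (j, a) (l, b))) := by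
          simp only [Finset.mul_sum, Finset.smul_sum, mul_assoc]
      _ = z ^ (l : ℕ) • (C i * if i = l then 1 else 0) := by rw [hb]
  simp only [hstep]
  simp only [mul_ite, mul_one, mul_zero, smul_ite, smul_zero]
  simp [Finset.sum_ite_eq]

private lemma partB (p N : ℕ) (c : ℂ) (R : ℝ) (hR : 0 < R)
    (W : ℂ → Matrix (Fin p) (Fin p) ℂ)
    (hW : ∀ a b, ContinuousOn (fun z => W z a b) (Metric.sphere c R))
    (PP QQ : Matrix (Fin N × Fin p) (Fin N × Fin p) ℂ)
    (hG2 : (QQᵀ * PP) * gramMatrix p N c R W = 1)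
    (C : Fin N → Matrix (Fin p) (Fin p) ℂ) (w : ℂ) :
    matCircleInt p c R (fun z => reprodKernel p N PP QQ w z * W z * (matPoly p N C z)ᵀ)
      = (matPoly p N C w)ᵀ := by
  have h1 : (fun z => reprodKernel p N PP QQ w z * W z * (matPoly p N C z)ᵀ)
      = fun z => (∑ l : Fin N, z ^ (l : ℕ) •
            ∑ j : Fin N, (blockPolyQ p N QQ j w)ᵀ * Matrix.of fun a b => PP (j, a) (l, b)) * W z *
          (∑ k : Fin N, z ^ (N - 1 - (k : ℕ)) • (C (Fin.rev k))ᵀ) := by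
    funext z; rw [kernel_eq_sum_z, matPoly_transpose]
  rw [h1, keyGeneral p N c R hR W hW]
  simp only [blockPolyQ_transpose, Finset.sum_mul, smul_mul_assoc]
  rw [sum4_swap fun (l k j m : Fin N) => w ^ (N - 1 - m.val) •
    ((Matrix.of fun a b => QQ (j, b) (m, a)) * (Matrix.of fun a b => PP (j, a) (l, b)) *
      (Matrix.of fun a b => gramMatrix p N c R W (l, a) (k, b)) * (C (Fin.rev k))ᵀ)]
  rw [matPoly_transpose]
  refine Finset.sum_congr rfl fun m _ => ?_
  have hstep : ∀ k : Fin N, (∑ j : Fin N, ∑ l : Fin N, w ^ (N - 1 - (m : ℕ)) •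
      ((Matrix.of fun a b => QQ (j, b) (m, a)) * (Matrix.of fun a b => PP (j, a) (l, b)) *
        (Matrix.of fun a b => gramMatrix p N c R W (l, a) (k, b)) * (C (Fin.rev k))ᵀ))
      = w ^ (N - 1 - (m : ℕ)) • ((if m = k then (1 : Matrix (Fin p) (Fin p) ℂ) else 0) * (C (Fin.rev k))ᵀ) := by
    intro k
    have hb := blocks_b p N c R W PP QQ hG2 m k
    simp only [← Matrix.mul_assoc] at hb
    calc (∑ j : Fin N, ∑ l : Fin N, w ^ (N - 1 - (m : ℕ)) •
        ((Matrix.of fun a b => QQ (j, b) (m, a)) * (Matrix.of fun a b => PP (j, a) (l, b)) *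
          (Matrix.of fun a b => gramMatrix p N c R W (l, a) (k, b)) * (C (Fin.rev k))ᵀ))
        = w ^ (N - 1 - (m : ℕ)) • ((∑ j : Fin N, ∑ l : Fin N,
            (Matrix.of fun a b => QQ (j, b) (m, a)) * (Matrix.of fun a b => PP (j, a) (l, b)) *
              (Matrix.of fun a b => gramMatrix p N c R W (l, a) (k, b))) * (C (Fin.rev k))ᵀ) := by
          simp only [Finset.smul_sum, Finset.sum_mul]
      _ = _ := by rw [hb]
  simp only [hstep]
  simp only [ite_mul, one_mul, zero_mul, smul_ite, smul_zero]
  simp [Finset.sum_ite_eq]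
/-- Properties of the reproducing kernel `R_N(w,z) = Σ_j Q_j(w)ᵗ P_j(z)`:
(a) `(2πi)⁻¹ ∮_γ P(w) W(w) R_N(w,z) dw = P(z)` for all matrix polynomials `P` of
degree `≤ N-1`; (b) `(2πi)⁻¹ ∮_γ R_N(w,z) W(z) Q(z)ᵗ dz = Q(w)ᵗ` for all matrix
polynomials `Q` of degree `≤ N-1`; (c) any bivariate matrix polynomial
`R̂(w,z) = Σ_{a,b=0}^{N-1} C_{a,b} w^a z^b` satisfying (a) or (b) equals `R_N`. -/
theorem reproducing_kernel_properties
    (p N : ℕ) (hp : 1 ≤ p) (hN : 1 ≤ N) (c : ℂ) (R : ℝ) (hR : 0 < R)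
    (W : ℂ → Matrix (Fin p) (Fin p) ℂ)
    (hW : ∀ a b, ContinuousOn (fun z => W z a b) (Metric.sphere c R))
    (PP QQ : Matrix (Fin N × Fin p) (Fin N × Fin p) ℂ)
    (hPP : IsUnit PP.det) (hQQ : IsUnit QQ.det)
    (hG : gramMatrix p N c R W * (QQᵀ * PP) = 1 ∧
      (QQᵀ * PP) * gramMatrix p N c R W = 1) :
    (∀ (C : Fin N → Matrix (Fin p) (Fin p) ℂ) (z : ℂ),
      matCircleInt p c R
          (fun w => matPoly p N C w * W w * reprodKernel p N PP QQ w z) =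
        matPoly p N C z) ∧
    (∀ (C : Fin N → Matrix (Fin p) (Fin p) ℂ) (w : ℂ),
      matCircleInt p c R
          (fun z => reprodKernel p N PP QQ w z * W z * (matPoly p N C z)ᵀ) =
        (matPoly p N C w)ᵀ) ∧
    (∀ Ch : Fin N → Fin N → Matrix (Fin p) (Fin p) ℂ,
      ((∀ (C : Fin N → Matrix (Fin p) (Fin p) ℂ) (z : ℂ),
          matCircleInt p c R
              (fun w => matPoly p N C w * W w *
                ∑ a : Fin N, ∑ b : Fin N, (w ^ (a : ℕ) * z ^ (b : ℕ)) • Ch a b) =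
            matPoly p N C z) ∨
        (∀ (C : Fin N → Matrix (Fin p) (Fin p) ℂ) (w : ℂ),
          matCircleInt p c R
              (fun z => (∑ a : Fin N, ∑ b : Fin N,
                  (w ^ (a : ℕ) * z ^ (b : ℕ)) • Ch a b) * W z * (matPoly p N C z)ᵀ) =
            (matPoly p N C w)ᵀ)) →
      ∀ w z : ℂ,
        (∑ a : Fin N, ∑ b : Fin N, (w ^ (a : ℕ) * z ^ (b : ℕ)) • Ch a b) =
          reprodKernel p N PP QQ w z) := by

  refine ⟨partA p N c R hR W hW PP QQ hG.1, partB p N c R hR W hW PP QQ hG.2, ?_⟩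
  rintro Ch (ha | hb) w z
  · -- uniqueness from property (a)
    set Ct : Fin N → Matrix (Fin p) (Fin p) ℂ :=
      fun a => ∑ b : Fin N, z ^ (b : ℕ) • (Ch a b)ᵀ with hCt
    have htr : ∀ v : ℂ, (matPoly p N Ct v)ᵀ
        = ∑ a : Fin N, ∑ b : Fin N, (v ^ (a : ℕ) * z ^ (b : ℕ)) • Ch a b := by
      intro v
      rw [matPoly, Matrix.transpose_sum]
      simp only [hCt, Matrix.transpose_smul, Matrix.transpose_sum, Matrix.transpose_transpose,
        Finset.smul_sum, smul_smul]
    set Cker : Fin N → Matrix (Fin p) (Fin p) ℂ :=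
      fun l => ∑ j : Fin N, (blockPolyQ p N QQ j w)ᵀ * Matrix.of fun a b => PP (j, a) (l, b)
      with hCker
    have hker : ∀ v : ℂ, matPoly p N Cker v = reprodKernel p N PP QQ w v := by
      intro v
      rw [matPoly]
      exact (kernel_eq_sum_z p N PP QQ w v).symm
    have hfe : (fun v => reprodKernel p N PP QQ w v * W v * (matPoly p N Ct v)ᵀ)
        = fun v => matPoly p N Cker v * W v *
            ∑ a : Fin N, ∑ b : Fin N, (v ^ (a : ℕ) * z ^ (b : ℕ)) • Ch a b := by
      funext v; rw [htr v, hker v]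
    calc (∑ a : Fin N, ∑ b : Fin N, (w ^ (a : ℕ) * z ^ (b : ℕ)) • Ch a b)
        = (matPoly p N Ct w)ᵀ := (htr w).symm
      _ = matCircleInt p c R
            (fun v => reprodKernel p N PP QQ w v * W v * (matPoly p N Ct v)ᵀ) :=
          (partB p N c R hR W hW PP QQ hG.2 Ct w).symm
      _ = matCircleInt p c R (fun v => matPoly p N Cker v * W v *
            ∑ a : Fin N, ∑ b : Fin N, (v ^ (a : ℕ) * z ^ (b : ℕ)) • Ch a b) := by rw [hfe]
      _ = matPoly p N Cker z := ha Cker z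
      _ = reprodKernel p N PP QQ w z := hker z
  · -- uniqueness from property (b)
    set Cw : Fin N → Matrix (Fin p) (Fin p) ℂ :=
      fun b => ∑ a : Fin N, w ^ (a : ℕ) • Ch a b with hCw
    have hw2 : ∀ v : ℂ, matPoly p N Cw v
        = ∑ a : Fin N, ∑ b : Fin N, (w ^ (a : ℕ) * v ^ (b : ℕ)) • Ch a b := by
      intro v
      rw [matPoly]
      simp only [hCw, Finset.smul_sum, smul_smul]
      rw [Finset.sum_comm]
      exact Finset.sum_congr rfl fun a _ => Finset.sum_congr rfl fun b _ => by rw [mul_comm]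
    set Ck : Fin N → Matrix (Fin p) (Fin p) ℂ :=
      fun l => (∑ j : Fin N,
        (Matrix.of fun a b => QQ (j, b) (Fin.rev l, a)) * blockPolyP p N PP j z)ᵀ with hCk
    have hck : ∀ v : ℂ, (matPoly p N Ck v)ᵀ = reprodKernel p N PP QQ v z := by
      intro v
      rw [matPoly_transpose]
      simp only [hCk, Fin.rev_rev, Matrix.transpose_transpose]
      exact (kernel_eq_sum_w p N PP QQ v z).symm
    have hfe : (fun v => (∑ a : Fin N, ∑ b : Fin N, (w ^ (a : ℕ) * v ^ (b : ℕ)) • Ch a b)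
          * W v * (matPoly p N Ck v)ᵀ)
        = fun v => matPoly p N Cw v * W v * reprodKernel p N PP QQ v z := by
      funext v; rw [hw2 v, hck v]
    calc (∑ a : Fin N, ∑ b : Fin N, (w ^ (a : ℕ) * z ^ (b : ℕ)) • Ch a b)
        = matPoly p N Cw z := (hw2 z).symm
      _ = matCircleInt p c R
            (fun v => matPoly p N Cw v * W v * reprodKernel p N PP QQ v z) :=
          (partA p N c R hR W hW PP QQ hG.1 Cw z).symm
      _ = matCircleInt p c R
            (fun v => (∑ a : Fin N, ∑ b : Fin N, (w ^ (a : ℕ) * v ^ (b : ℕ)) • Ch a b)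
              * W v * (matPoly p N Ck v)ᵀ) := by rw [hfe]
      _ = (matPoly p N Ck w)ᵀ := hb Ck w
      _ = reprodKernel p N PP QQ w z := hck w
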